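/- Let d ≥ 3 with d ≠ 5. Then the integral ∫₀^{π/2} cos(2T) h_d(cos T) dT is nonzero, where h_d(y) = ∫_{−1}^1 |y+x|^{(5−d)/(d−2)}(1−x²)^{(d+2)/2} dx; it is positive if d ∈ {3,4} and negative if d ≥ 6. -/

import Mathlib

/-!
Write `h(y) = ∫ φ |y + x| w(x) dx` with `φ t = t ^ r` and `w` the weight `(1 - x²) ^ β` on
`[-1, 1]`. For `0 ≤ y₁ < y₂` the reflection `x ↦ -(y₁ + y₂) - x` swaps `|y₁ + x|` and
`|y₂ + x|`, so with `g x = φ |y₂ + x| - φ |y₁ + x|`,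
`2 (h(y₂) - h(y₁)) = ∫ g(x) (w(x) - w(-(y₁ + y₂) - x)) dx`.
As `w` is even and decreasing in `|x|`, both factors change sign at `x = -(y₁ + y₂) / 2`, so the
integrand has the sign of `r`, strictly so near `x = 1` where the reflected weight vanishes.
Hence `h_d` is strictly increasing for `d < 5` (`r > 0`) and strictly decreasing for `d > 5`
(`-1 < r < 0`). Since `∫₀^{π/2} cos 2T dT = 0`, the outer integral equals
`∫ cos 2T (H(cos T) - H(cos (π/4))) dT`, and
`cos 2T = 2 (cos T + cos (π/4)) (cos T - cos (π/4))` gives the integrand the sign of the monotonicity of `H`.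
-/

open Real intervalIntegral

/-- `h_d(y) = ∫_{−1}^1 |y+x|^{(5−d)/(d−2)} (1−x²)^{(d+2)/2} dx`. -/
noncomputable def hFun (d : ℕ) (y : ℝ) : ℝ :=
  ∫ x in (-1:ℝ)..1, |y + x| ^ ((5 - (d:ℝ)) / ((d:ℝ) - 2)) * (1 - x ^ 2) ^ (((d:ℝ) + 2) / 2)

open MeasureTheory Set

lemma locallyIntegrable_abs_rpow {r : ℝ} (hr : -1 < r) :
    LocallyIntegrable (fun x : ℝ => |x| ^ r) := by
  refine locallyIntegrable_of_norm_le_rpow (μ := volume) (by simp) (C := 1) (α := -r)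
    (by simpa using neg_lt.1 hr) (ae_of_all _ fun x => ?_)
    (continuous_abs.measurable.pow_const r).aestronglyMeasurable
  simp [abs_of_nonneg (rpow_nonneg (abs_nonneg x) r)]

lemma intervalIntegrable_abs_add_rpow {r : ℝ} (hr : -1 < r) (y a b : ℝ) :
    IntervalIntegrable (fun x => |y + x| ^ r) volume a b := by
  have := ((locallyIntegrable_abs_rpow hr).integrableOn_isCompact (isCompact_uIcc (a := a + y)
    (b := b + y))).intervalIntegrable
  simpa using this.comp_add_left y

-- Extended by zero off `[-1, 1]`, where `Real.rpow` at the negative base `1 - x²` is junk.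
noncomputable def gegenbauerWeight (β x : ℝ) : ℝ :=
  (Icc (-1) 1).indicator (fun x => (1 - x ^ 2) ^ β) x

lemma gegenbauerWeight_nonneg (β x : ℝ) : 0 ≤ gegenbauerWeight β x :=
  indicator_nonneg (fun x hx => rpow_nonneg (by nlinarith [hx.1, hx.2]) β) x

lemma gegenbauerWeight_pos (β : ℝ) {x : ℝ} (hx : |x| < 1) : 0 < gegenbauerWeight β x := by
  obtain ⟨h₁, h₂⟩ := abs_lt.1 hx
  rw [gegenbauerWeight, indicator_of_mem (show x ∈ Icc (-1) 1 from ⟨h₁.le, h₂.le⟩)]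
  exact rpow_pos_of_pos (by nlinarith) β

lemma gegenbauerWeight_eq_zero (β : ℝ) {x : ℝ} (hx : 1 < |x|) : gegenbauerWeight β x = 0 :=
  indicator_of_notMem (fun h : x ∈ Icc (-1) 1 => hx.not_ge (abs_le.2 h)) _

lemma gegenbauerWeight_le_of_abs_le {β : ℝ} (hβ : 0 ≤ β) {x t : ℝ} (h : |t| ≤ |x|) :
    gegenbauerWeight β x ≤ gegenbauerWeight β t := by
  by_cases hx : x ∈ Icc (-1) 1
  · have ht : t ∈ Icc (-1) 1 := abs_le.1 (h.trans (abs_le.2 hx))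
    rw [gegenbauerWeight, gegenbauerWeight, indicator_of_mem hx, indicator_of_mem ht]
    have := sq_le_sq.2 h
    exact rpow_le_rpow (by nlinarith [hx.1, hx.2]) (by linarith) hβ
  · rw [gegenbauerWeight, indicator_of_notMem hx]
    exact gegenbauerWeight_nonneg β t

lemma integral_mul_gegenbauerWeight (f : ℝ → ℝ) (β : ℝ) :
    ∫ x, f x * gegenbauerWeight β x = ∫ x in (-1:ℝ)..1, f x * (1 - x ^ 2) ^ β := by
  simp_rw [gegenbauerWeight, ← indicator_mul_right,
    MeasureTheory.integral_indicator measurableSet_Icc, integral_Icc_eq_integral_Ioc,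
    ← integral_of_le (by norm_num : (-1:ℝ) ≤ 1)]

lemma integrable_abs_add_rpow_mul_gegenbauerWeight {r β : ℝ} (hr : -1 < r) (hβ : 0 ≤ β)
    (y : ℝ) : Integrable (fun x => |y + x| ^ r * gegenbauerWeight β x) := by
  simp_rw [gegenbauerWeight, ← indicator_mul_right (Icc (-1) 1) (fun x => |y + x| ^ r)]
  rw [integrable_indicator_iff measurableSet_Icc]
  refine IntegrableOn.mul_continuousOn ?_ ?_ isCompact_Icc
  · exact (intervalIntegrable_iff_integrableOn_Icc_of_le (by norm_num)).1
      (intervalIntegrable_abs_add_rpow hr y (-1) 1)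
  · exact ((continuous_rpow_const hβ).comp (by fun_prop)).continuousOn

section Reflection

variable {g W : ℝ → ℝ} {s : ℝ}

lemma mul_comp_sub_eq_neg_comp_sub (hg : ∀ x, g (s - x) = -g x) :
    (fun x => g x * W (s - x)) = fun x => -(g (s - x) * W (s - x)) := by
  funext x; rw [hg, neg_mul, neg_neg]

lemma integrable_mul_comp_sub_of_comp_sub_eq_neg (hg : ∀ x, g (s - x) = -g x)
    (hint : Integrable (fun x => g x * W x)) : Integrable (fun x => g x * W (s - x)) := by
  rw [mul_comp_sub_eq_neg_comp_sub hg]; exact (hint.comp_sub_left s).neg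

lemma two_mul_integral_mul_eq_integral_mul_sub_comp_sub (hg : ∀ x, g (s - x) = -g x)
    (hint : Integrable (fun x => g x * W x)) :
    2 * ∫ x, g x * W x = ∫ x, g x * (W x - W (s - x)) := by
  have hint' := integrable_mul_comp_sub_of_comp_sub_eq_neg hg hint
  have hsame : ∫ x, g x * W (s - x) = -∫ x, g x * W x := by
    rw [mul_comp_sub_eq_neg_comp_sub hg, MeasureTheory.integral_neg,
      integral_sub_left_eq_self (fun x => g x * W x) volume s]
  simp_rw [mul_sub]
  rw [integral_sub hint hint', hsame]
  ring

end Reflection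

lemma sub_mul_gegenbauerWeight_sub_comp_sub_nonneg {φ : ℝ → ℝ} (hφ : MonotoneOn φ (Ioi 0))
    {β : ℝ} (hβ : 0 ≤ β) {y₁ y₂ x : ℝ} (hy : y₁ ≤ y₂) (hy₀ : 0 ≤ y₁ + y₂)
    (hx₁ : y₁ + x ≠ 0) (hx₂ : y₂ + x ≠ 0) :
    0 ≤ (φ |y₂ + x| - φ |y₁ + x|) *
      (gegenbauerWeight β x - gegenbauerWeight β (-(y₁ + y₂) - x)) := by
  have hx₁ : (0 : ℝ) < |y₁ + x| := abs_pos.2 hx₁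
  have hx₂ : (0 : ℝ) < |y₂ + x| := abs_pos.2 hx₂
  rcases le_total 0 (y₁ + y₂ + 2 * x) with h | h
  · have hφ' := hφ hx₁ hx₂ (sq_le_sq.1 (by nlinarith))
    have hW := gegenbauerWeight_le_of_abs_le hβ (x := -(y₁ + y₂) - x) (t := x)
      (sq_le_sq.1 (by nlinarith))
    exact mul_nonneg (by linarith) (by linarith)
  · have hφ' := hφ hx₂ hx₁ (sq_le_sq.1 (by nlinarith))
    have hW := gegenbauerWeight_le_of_abs_le hβ (x := x) (t := -(y₁ + y₂) - x)
      (sq_le_sq.1 (by nlinarith))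
    exact mul_nonneg_of_nonpos_of_nonpos (by linarith) (by linarith)

theorem strictMonoOn_integral_comp_abs_add_mul_gegenbauerWeight {φ : ℝ → ℝ}
    (hφ : StrictMonoOn φ (Ioi 0)) {β : ℝ} (hβ : 0 ≤ β)
    (hint : ∀ y, Integrable (fun x => φ |y + x| * gegenbauerWeight β x)) :
    StrictMonoOn (fun y => ∫ x, φ |y + x| * gegenbauerWeight β x) (Ici 0) := by
  intro y₁ (hy₁ : 0 ≤ y₁) y₂ _ h₁₂
  set W := gegenbauerWeight β
  set g := fun x => φ |y₂ + x| - φ |y₁ + x|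
  set F := fun x => g x * (W x - W (-(y₁ + y₂) - x))
  have hg : ∀ x, g (-(y₁ + y₂) - x) = -g x := fun x => by
    simp only [g, show y₂ + (-(y₁ + y₂) - x) = -(y₁ + x) by ring,
      show y₁ + (-(y₁ + y₂) - x) = -(y₂ + x) by ring, abs_neg, neg_sub]
  have hgW : Integrable (fun x => g x * W x) :=
    ((hint y₂).sub (hint y₁)).congr (ae_of_all _ fun x => (sub_mul _ _ _).symm)
  have hF : Integrable F :=
    (hgW.sub (integrable_mul_comp_sub_of_comp_sub_eq_neg hg hgW)).congr
      (ae_of_all _ fun x => (mul_sub _ _ _).symm)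
  have hdiff : 2 * ((∫ x, φ |y₂ + x| * W x) - ∫ x, φ |y₁ + x| * W x) = ∫ x, F x := by
    rw [← integral_sub (hint y₂) (hint y₁),
      ← two_mul_integral_mul_eq_integral_mul_sub_comp_sub hg hgW]
    simp only [g, sub_mul]
  have hF_nonneg : 0 ≤ᵐ[volume] F := by
    filter_upwards [Measure.ae_ne volume (-y₁), Measure.ae_ne volume (-y₂)] with x hx₁ hx₂
    exact sub_mul_gegenbauerWeight_sub_comp_sub_nonneg hφ.monotoneOn hβ h₁₂.le (by linarith)
      (fun h => hx₁ (by linarith)) (fun h => hx₂ (by linarith))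
  set a := max (1 - (y₁ + y₂)) 0
  have hF_pos : ∀ x ∈ Ioo a 1, 0 < F x := by
    rintro x ⟨hax, hx1⟩
    have hx₀ : 0 < x := (le_max_right _ _).trans_lt hax
    have hxa : 1 - (y₁ + y₂) < x := (le_max_left _ _).trans_lt hax
    have hg : 0 < g x := by
      have := hφ (show 0 < y₁ + x by linarith) (show 0 < y₂ + x by linarith) (by linarith)
      simp only [g, abs_of_pos (show 0 < y₁ + x by linarith),
        abs_of_pos (show 0 < y₂ + x by linarith)]
      linarith
    have hW₀ : W (-(y₁ + y₂) - x) = 0 :=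
      gegenbauerWeight_eq_zero β (by rw [abs_of_neg (by linarith)]; linarith)
    have hW : 0 < W x := gegenbauerWeight_pos β (abs_lt.2 ⟨by linarith, hx1⟩)
    simp only [F, hW₀, sub_zero]
    exact mul_pos hg hW
  have hpos : 0 < ∫ x, F x := by
    refine (integral_pos_iff_support_of_nonneg_ae hF_nonneg hF).2 ?_
    refine lt_of_lt_of_le ?_ (measure_mono fun x hx => (hF_pos x hx).ne')
    simp [a, show (0:ℝ) < y₁ + y₂ by linarith]
  simp only
  linarith

theorem strictMonoOn_integral_abs_add_rpow_mul_gegenbauerWeight {r β : ℝ} (hr : 0 < r)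
    (hβ : 0 ≤ β) : StrictMonoOn (fun y => ∫ x, |y + x| ^ r * gegenbauerWeight β x) (Ici 0) :=
  strictMonoOn_integral_comp_abs_add_mul_gegenbauerWeight
    ((strictMonoOn_rpow_Ici_of_exponent_pos hr).mono Ioi_subset_Ici_self) hβ
    (integrable_abs_add_rpow_mul_gegenbauerWeight (by linarith) hβ)

theorem strictAntiOn_integral_abs_add_rpow_mul_gegenbauerWeight {r β : ℝ} (hr₁ : -1 < r)
    (hr : r < 0) (hβ : 0 ≤ β) :
    StrictAntiOn (fun y => ∫ x, |y + x| ^ r * gegenbauerWeight β x) (Ici 0) := by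
  have h := strictMonoOn_integral_comp_abs_add_mul_gegenbauerWeight
    (strictAntiOn_rpow_Ioi_of_exponent_neg hr).neg hβ
    fun y => (integrable_abs_add_rpow_mul_gegenbauerWeight hr₁ hβ y).neg.congr
      (ae_of_all _ fun x => (neg_mul _ _).symm)
  simp only [neg_mul, MeasureTheory.integral_neg] at h
  exact fun a ha b hb hab => neg_lt_neg_iff.1 (h ha hb hab)

lemma integral_cos_two_mul_zero_pi_div_two : ∫ T in (0:ℝ)..(π / 2), cos (2 * T) = 0 := by
  simp [integral_comp_mul_left (fun T => cos T) two_ne_zero, mul_div_cancel₀ π two_ne_zero]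

lemma sub_mul_sub_pos_of_strictMonoOn {H : ℝ → ℝ} {s : Set ℝ} (hH : StrictMonoOn H s)
    {a b : ℝ} (ha : a ∈ s) (hb : b ∈ s) (hab : a ≠ b) : 0 < (a - b) * (H a - H b) := by
  rcases hab.lt_or_gt with h | h
  · exact mul_pos_of_neg_of_neg (by linarith) (by linarith [hH ha hb h])
  · exact mul_pos (by linarith) (by linarith [hH hb ha h])

lemma cos_mem_Icc_of_mem_Icc {T : ℝ} (hT : T ∈ Icc 0 (π / 2)) : cos T ∈ Icc (0:ℝ) 1 :=
  ⟨cos_nonneg_of_mem_Icc ⟨by linarith [hT.1, pi_pos], hT.2⟩, cos_le_one T⟩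

lemma cos_two_mul_eq_mul_add_cos_pi_div_four_mul_sub (T : ℝ) :
    cos (2 * T) = 2 * (cos T + cos (π / 4)) * (cos T - cos (π / 4)) := by
  have h : cos (π / 4) ^ 2 = 1 / 2 := by
    rw [cos_pi_div_four, div_pow, sq_sqrt zero_le_two]; norm_num
  rw [cos_two_mul]; linear_combination 2 * h

lemma intervalIntegrable_comp_cos {H : ℝ → ℝ} (hH : MonotoneOn H (Icc 0 1)) :
    IntervalIntegrable (fun T => H (cos T)) volume 0 (π / 2) := by
  refine AntitoneOn.intervalIntegrable ?_
  rw [uIcc_of_le (by linarith [pi_pos])]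
  intro T₁ h₁ T₂ h₂ h
  exact hH (cos_mem_Icc_of_mem_Icc h₂) (cos_mem_Icc_of_mem_Icc h₁) (strictAntiOn_cos.antitoneOn
    ⟨h₁.1, by linarith [h₁.2, pi_pos]⟩ ⟨h₂.1, by linarith [h₂.2, pi_pos]⟩ h)

theorem integral_cos_two_mul_mul_comp_cos_pos {H : ℝ → ℝ} (hH : StrictMonoOn H (Icc 0 1)) :
    0 < ∫ T in (0:ℝ)..(π / 2), cos (2 * T) * H (cos T) := by
  have hπ := pi_pos
  set c := cos (π / 4)
  have hc : c ∈ Icc (0:ℝ) 1 := cos_mem_Icc_of_mem_Icc ⟨by linarith, by linarith⟩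
  have hH_int := intervalIntegrable_comp_cos hH.monotoneOn
  set F := fun T => cos (2 * T) * (H (cos T) - H c)
  have hF : ∀ T, F T = 2 * (cos T + c) * ((cos T - c) * (H (cos T) - H c)) := fun T => by
    simp only [F, cos_two_mul_eq_mul_add_cos_pi_div_four_mul_sub]; ring
  have hF_int : IntervalIntegrable F volume 0 (π / 2) :=
    (hH_int.sub intervalIntegrable_const).continuousOn_mul (by fun_prop)
  have hF_nonneg : ∀ T ∈ Icc 0 (π / 2), 0 ≤ F T := fun T hT => by
    have hcos := cos_mem_Icc_of_mem_Icc hT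
    rw [hF]
    rcases eq_or_ne (cos T) c with h | h
    · simp [h]
    · exact mul_nonneg (by linarith [hcos.1, hc.1])
        (sub_mul_sub_pos_of_strictMonoOn hH hcos hc h).le
  have hF_pos : ∀ T ∈ Ioo 0 (π / 4), 0 < F T := fun T hT => by
    have hcos := cos_mem_Icc_of_mem_Icc ⟨hT.1.le, by linarith [hT.2]⟩
    have hlt : c < cos T := strictAntiOn_cos ⟨hT.1.le, by linarith [hT.2]⟩
      ⟨by linarith, by linarith⟩ hT.2
    rw [hF]
    exact mul_pos (by linarith [hcos.1, hc.1])
      (sub_mul_sub_pos_of_strictMonoOn hH hcos hc hlt.ne')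
  have hshift : ∫ T in (0:ℝ)..(π / 2), F T =
      ∫ T in (0:ℝ)..(π / 2), cos (2 * T) * H (cos T) := by
    simp only [F, mul_sub]
    rw [intervalIntegral.integral_sub (hH_int.continuousOn_mul (by fun_prop))
      (Continuous.intervalIntegrable (by fun_prop) _ _), intervalIntegral.integral_mul_const,
      integral_cos_two_mul_zero_pi_div_two, zero_mul, sub_zero]
  rw [← hshift]
  calc 0 < ∫ T in (0:ℝ)..(π / 4), F T :=
        intervalIntegral_pos_of_pos_on (hF_int.mono_set ?_) hF_pos (by linarith)
    _ ≤ ∫ T in (0:ℝ)..(π / 2), F T := integral_mono_interval le_rfl (by linarith)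
        (by linarith) ?_ hF_int
  · rw [uIcc_of_le (by linarith), uIcc_of_le (by linarith)]
    exact Icc_subset_Icc_right (by linarith)
  · exact (ae_restrict_iff' measurableSet_Ioc).2
      (ae_of_all _ fun T hT => hF_nonneg T (Ioc_subset_Icc_self hT))

theorem integral_cos_two_mul_mul_comp_cos_neg {H : ℝ → ℝ}
    (hH : StrictAntiOn H (Icc 0 1)) : ∫ T in (0:ℝ)..(π / 2), cos (2 * T) * H (cos T) < 0 := by
  have h := integral_cos_two_mul_mul_comp_cos_pos hH.neg
  simp only [mul_neg, intervalIntegral.integral_neg] at h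
  linarith

/-- For `d ≥ 3` with `d ≠ 5`, the integral `∫₀^{π/2} cos(2T) h_d(cos T) dT` is nonzero:
positive if `d ∈ {3,4}`, negative if `d ≥ 6`. -/
theorem integral_cos_hFun_ne_zero (d : ℕ) (hd : 3 ≤ d) (hd5 : d ≠ 5) :
    (∫ T in (0:ℝ)..(π / 2), Real.cos (2 * T) * hFun d (Real.cos T)) ≠ 0 ∧
    ((d = 3 ∨ d = 4) → 0 < ∫ T in (0:ℝ)..(π / 2), Real.cos (2 * T) * hFun d (Real.cos T)) ∧
    (6 ≤ d → (∫ T in (0:ℝ)..(π / 2), Real.cos (2 * T) * hFun d (Real.cos T)) < 0) := by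
  have hd' : (3:ℝ) ≤ d := by exact_mod_cast hd
  have hβ : 0 ≤ ((d:ℝ) + 2) / 2 := by positivity
  have hr : -1 < (5 - (d:ℝ)) / ((d:ℝ) - 2) := by rw [lt_div_iff₀ (by linarith)]; linarith
  have hFun_eq : hFun d = fun y =>
      ∫ x, |y + x| ^ ((5 - (d:ℝ)) / ((d:ℝ) - 2)) * gegenbauerWeight (((d:ℝ) + 2) / 2) x :=
    funext fun y => (integral_mul_gegenbauerWeight _ _).symm
  have hpos (h : d < 5) : 0 < ∫ T in (0:ℝ)..(π / 2), cos (2 * T) * hFun d (cos T) := by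
    have hr₀ : 0 < (5 - (d:ℝ)) / ((d:ℝ) - 2) :=
      div_pos (by linarith [show (d:ℝ) < 5 by exact_mod_cast h]) (by linarith)
    rw [hFun_eq]
    exact integral_cos_two_mul_mul_comp_cos_pos
      ((strictMonoOn_integral_abs_add_rpow_mul_gegenbauerWeight hr₀ hβ).mono Icc_subset_Ici_self)
  have hneg (h : 5 < d) : ∫ T in (0:ℝ)..(π / 2), cos (2 * T) * hFun d (cos T) < 0 := by
    have hr₀ : (5 - (d:ℝ)) / ((d:ℝ) - 2) < 0 :=
      div_neg_of_neg_of_pos (by linarith [show (5:ℝ) < d by exact_mod_cast h]) (by linarith)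
    rw [hFun_eq]
    exact integral_cos_two_mul_mul_comp_cos_neg
      ((strictAntiOn_integral_abs_add_rpow_mul_gegenbauerWeight hr hr₀ hβ).mono
        Icc_subset_Ici_self)
  refine ⟨?_, fun h => hpos (by omega), fun h => hneg (by omega)⟩
  rcases Nat.lt_or_gt_of_ne hd5 with h | h
  exacts [(hpos h).ne', (hneg h).ne]
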